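/- Let (Ω, 𝓕, P) be a probability space, R : Ω → ℝᵐˣᵐ measurable and essentially bounded, (R̃ₖ)ₖ∈ℕ and (R̄ₖ)ₖ∈ℕ sequences of measurable ℝᵐˣᵐ-valued random variables with ∑ₖ E|R̃ₖ|² < ∞ and ∑ₖ E|R̄ₖ|² < ∞, and (R̂ᵢⱼ)ᵢ,ⱼ∈ℕ integrable ℝᵐˣᵐ-valued random variables with ∑ᵢ,ⱼ |E[R̂ᵢⱼ]|² < ∞. Define the bounded operator ℛ on L²(Ω; ℝᵐ) by ℛη = Rη + ∑ₖ R̃ₖᵀ E[R̄ₖ η] + ∑ₖ R̄ₖᵀ E[R̃ₖ η] + ∑ᵢ,ⱼ R̃ᵢᵀ E[R̂ᵢⱼ] E[R̃ⱼ η]. Let δ > 0 and assume that for P-a.e. ω ∈ Ω: for every c ∈ ℝᵐ and every finitely supported sequence (dₖ)ₖ∈ℕ in ℝᵐ, ⟨R(ω)c, c⟩ + 2∑ₖ ⟨R̄ₖ(ω)c, dₖ⟩ + ∑ᵢ,ⱼ ⟨R̂ᵢⱼ(ω)dⱼ, dᵢ⟩ ≥ δ|c|². Then E[⟨ℛη,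 η⟩] ≥ δ E[|η|²] for every η ∈ L²(Ω; ℝᵐ). -/

import Mathlib

open MeasureTheory Filter
open scoped RealInnerProductSpace

/-- Matrix–vector multiplication, viewed as a map between Euclidean spaces. -/
noncomputable def matVec {n m : ℕ} (M : Matrix (Fin n) (Fin m) ℝ)
    (v : EuclideanSpace ℝ (Fin m)) : EuclideanSpace ℝ (Fin n) :=
  (WithLp.equiv 2 (Fin n → ℝ)).symm (M.mulVec ((WithLp.equiv 2 (Fin m → ℝ)) v))

/-- Square of the Frobenius norm of a real matrix. -/
def frobSq {n m : ℕ} (M : Matrix (Fin n) (Fin m) ℝ) : ℝ := ∑ i, ∑ j, (M i j) ^ 2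

/-- Frobenius norm of a real matrix. -/
noncomputable def frob {n m : ℕ} (M : Matrix (Fin n) (Fin m) ℝ) : ℝ :=
  Real.sqrt (frobSq M)

/-- Entrywise expectation of a matrix-valued random variable. -/
noncomputable def matExp {n m : ℕ} {Ω : Type*} [MeasurableSpace Ω] (P : MeasureTheory.Measure Ω)
    (M : Ω → Matrix (Fin n) (Fin m) ℝ) : Matrix (Fin n) (Fin m) ℝ :=
  Matrix.of fun a b => ∫ ω, M ω a b ∂P

/-- Pointwise action of the mean-field operator
`ℛη = Rη + ∑ₖ R̃ₖᵀ E[R̄ₖ η] + ∑ₖ R̄ₖᵀ E[R̃ₖ η] + ∑ᵢⱼ R̃ᵢᵀ E[R̂ᵢⱼ] E[R̃ⱼ η]`. -/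
noncomputable def meanFieldR {m : ℕ} {Ω : Type*} [MeasurableSpace Ω]
    (P : MeasureTheory.Measure Ω)
    (R : Ω → Matrix (Fin m) (Fin m) ℝ) (Rtil Rbar : ℕ → Ω → Matrix (Fin m) (Fin m) ℝ)
    (Rhat : ℕ → ℕ → Ω → Matrix (Fin m) (Fin m) ℝ)
    (η : Ω → EuclideanSpace ℝ (Fin m)) (ω : Ω) : EuclideanSpace ℝ (Fin m) :=
  matVec (R ω) (η ω) +
    (∑' k, matVec (Rtil k ω).transpose (∫ ω', matVec (Rbar k ω') (η ω') ∂P)) +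
    (∑' k, matVec (Rbar k ω).transpose (∫ ω', matVec (Rtil k ω') (η ω') ∂P)) +
    ∑' p : ℕ × ℕ, matVec (Rtil p.1 ω).transpose
      (matVec (matExp P (Rhat p.1 p.2)) (∫ ω', matVec (Rtil p.2 ω') (η ω') ∂P))

/-! With `aₖ = E[R̄ₖη]` and `bₖ = E[R̃ₖη]`, expectation can be interchanged with the series
defining `ℛη` (the coefficients are controlled in L² by Cauchy–Schwarz), giving
`E⟨ℛη, η⟩ = E⟨Rη, η⟩ + 2 ∑ₖ ⟨aₖ, bₖ⟩ + ∑ᵢⱼ ⟨E[R̂ᵢⱼ] bⱼ, bᵢ⟩`.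
Taking `c = η(ω)` and the deterministic truncation `d = b · 1_S` in the pointwise hypothesis and
integrating bounds `δ E|η|²` by the same expression with the sums restricted to `S` and `S × S`;
letting the finite set `S` exhaust `ℕ` gives the claim. -/

open MeasureTheory Filter Topology
open scoped RealInnerProductSpace ENNReal Matrix

section MatrixVector

variable {n m : ℕ}

lemma frobSq_nonneg (M : Matrix (Fin n) (Fin m) ℝ) : 0 ≤ frobSq M := by
  unfold frobSq; positivity

lemma frob_nonneg (M : Matrix (Fin n) (Fin m) ℝ) : 0 ≤ frob M := Real.sqrt_nonneg _

lemma frob_sq (M : Matrix (Fin n) (Fin m) ℝ) : frob M ^ 2 = frobSq M :=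
  Real.sq_sqrt (frobSq_nonneg M)

lemma frobSq_transpose (M : Matrix (Fin n) (Fin m) ℝ) : frobSq Mᵀ = frobSq M :=
  Finset.sum_comm

-- Stated on the function type, which unlike `Matrix` carries a `MeasurableSpace` instance.
lemma continuous_matVec :
    Continuous fun p : (Fin n → Fin m → ℝ) × EuclideanSpace ℝ (Fin m) =>
      matVec (Matrix.of p.1) p.2 :=
  (PiLp.continuous_toLp 2 _).comp
    (Continuous.matrix_mulVec (by fun_prop) ((PiLp.continuous_ofLp 2 _).comp continuous_snd))

lemma matVec_zero (M : Matrix (Fin n) (Fin m) ℝ) : matVec M 0 = 0 :=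
  map_zero M.toEuclideanLin

lemma inner_matVec_eq_sum (M : Matrix (Fin n) (Fin m) ℝ) (v : EuclideanSpace ℝ (Fin m))
    (w : EuclideanSpace ℝ (Fin n)) : ⟪matVec M v, w⟫ = ∑ i, ∑ j, M i j * v j * w i := by
  simp only [matVec, PiLp.inner_apply, RCLike.inner_apply, conj_trivial]
  refine Finset.sum_congr rfl fun i _ => ?_
  rw [mul_comm]
  exact Finset.sum_mul Finset.univ (fun j => M i j * v j) (w i)

lemma inner_matVec_transpose (M : Matrix (Fin n) (Fin m) ℝ) (a : EuclideanSpace ℝ (Fin n))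
    (w : EuclideanSpace ℝ (Fin m)) : ⟪matVec Mᵀ a, w⟫ = ⟪a, matVec M w⟫ := by
  have h := Matrix.toEuclideanLin_conjTranspose_eq_adjoint M
  rw [Matrix.conjTranspose_eq_transpose_of_trivial] at h
  change ⟪Mᵀ.toEuclideanLin a, w⟫ = ⟪a, M.toEuclideanLin w⟫
  rw [h, LinearMap.adjoint_inner_left]

lemma norm_matVec_le (M : Matrix (Fin n) (Fin m) ℝ) (v : EuclideanSpace ℝ (Fin m)) :
    ‖matVec M v‖ ≤ frob M * ‖v‖ := by
  refine le_of_pow_le_pow_left₀ two_ne_zero (by positivity [frob_nonneg M]) ?_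
  rw [mul_pow, frob_sq, EuclideanSpace.norm_sq_eq, EuclideanSpace.norm_sq_eq, frobSq,
    Finset.sum_mul]
  refine Finset.sum_le_sum fun i _ => ?_
  simpa [matVec, Matrix.mulVec, dotProduct] using Finset.sum_mul_sq_le_sq_mul_sq _ (M i) v

end MatrixVector

section Summability

variable {n m : ℕ}

lemma summable_mul_of_summable_sq {ι : Type*} {x y : ι → ℝ} (hx : Summable fun i => x i ^ 2)
    (hy : Summable fun i => y i ^ 2) : Summable fun i => x i * y i :=
  ((hx.add hy).div_const 2).of_norm_bounded fun i => by
    rw [Real.norm_eq_abs, abs_mul]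
    nlinarith [sq_nonneg (|x i| - |y i|), sq_abs (x i), sq_abs (y i)]

lemma summable_inner_of_summable_norm_sq {ι E : Type*} [NormedAddCommGroup E]
    [InnerProductSpace ℝ E] {x y : ι → E} (hx : Summable fun i => ‖x i‖ ^ 2)
    (hy : Summable fun i => ‖y i‖ ^ 2) : Summable fun i => ⟪x i, y i⟫ :=
  (summable_mul_of_summable_sq hx hy).of_norm_bounded fun _ => norm_inner_le_norm _ _

lemma summable_mul_norm_matVec {H : ℕ → ℕ → Matrix (Fin n) (Fin m) ℝ} {s : ℕ → ℝ}
    {v : ℕ → EuclideanSpace ℝ (Fin m)} (hH : Summable fun p : ℕ × ℕ => frobSq (H p.1 p.2))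
    (hs₀ : ∀ k, 0 ≤ s k) (hs : Summable fun k => s k ^ 2) (hv : Summable fun k => ‖v k‖ ^ 2) :
    Summable fun p : ℕ × ℕ => s p.1 * ‖matVec (H p.1 p.2) (v p.2)‖ := by
  refine (summable_mul_of_summable_sq (x := fun p : ℕ × ℕ => frob (H p.1 p.2))
    (y := fun p => s p.1 * ‖v p.2‖) ?_ ?_).of_nonneg_of_le
    (fun p => mul_nonneg (hs₀ _) (norm_nonneg _)) fun p => ?_
  · simpa only [frob_sq] using hH
  · simpa only [mul_pow] using hs.mul_of_nonneg hv (fun _ => sq_nonneg _) fun _ => sq_nonneg _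
  · calc s p.1 * ‖matVec (H p.1 p.2) (v p.2)‖ ≤ s p.1 * (frob (H p.1 p.2) * ‖v p.2‖) :=
          mul_le_mul_of_nonneg_left (norm_matVec_le _ _) (hs₀ _)
      _ = frob (H p.1 p.2) * (s p.1 * ‖v p.2‖) := by ring

lemma summable_inner_matVec {H : ℕ → ℕ → Matrix (Fin n) (Fin m) ℝ}
    {v : ℕ → EuclideanSpace ℝ (Fin m)} {w : ℕ → EuclideanSpace ℝ (Fin n)}
    (hH : Summable fun p : ℕ × ℕ => frobSq (H p.1 p.2)) (hv : Summable fun k => ‖v k‖ ^ 2)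
    (hw : Summable fun k => ‖w k‖ ^ 2) :
    Summable fun p : ℕ × ℕ => ⟪matVec (H p.1 p.2) (v p.2), w p.1⟫ :=
  (summable_mul_norm_matVec hH (fun _ => norm_nonneg _) hw hv).of_norm_bounded fun p => by
    simpa only [mul_comm] using norm_inner_le_norm (matVec (H p.1 p.2) (v p.2)) (w p.1)

end Summability

lemma tendsto_finset_product_self :
    Tendsto (fun S : Finset ℕ => S ×ˢ S) atTop atTop :=
  tendsto_finsetProd_atTop.comp tendsto_atTop_diagonal

section Integration

variable {α : Type*} [MeasurableSpace α] {μ : Measure α}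

lemma integral_mul_le_sqrt_mul_sqrt {f g : α → ℝ} (hf₀ : ∀ a, 0 ≤ f a) (hg₀ : ∀ a, 0 ≤ g a)
    (hf : MemLp f 2 μ) (hg : MemLp g 2 μ) :
    ∫ a, f a * g a ∂μ ≤ √(∫ a, f a ^ 2 ∂μ) * √(∫ a, g a ^ 2 ∂μ) := by
  have h := integral_mul_le_Lp_mul_Lq_of_nonneg Real.HolderConjugate.two_two
    (ae_of_all _ hf₀) (ae_of_all _ hg₀) (by simpa using hf) (by simpa using hg)
  simpa only [Real.rpow_two, Real.sqrt_eq_rpow] using h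

theorem exists_integrable_ae_hasSum_of_summable_integral_norm {E : Type*} [NormedAddCommGroup E]
    [CompleteSpace E] {ι : Type*} [Countable ι] {F : ι → α → E}
    (hF_int : ∀ i, Integrable (F i) μ) (hF_sum : Summable fun i => ∫ a, ‖F i a‖ ∂μ) :
    ∃ g, Integrable g μ ∧ ∀ᵐ a ∂μ, HasSum (fun i => F i a) (g a) := by
  set f : ι → α →₁[μ] E := fun i => (hF_int i).toL1
  have hf : ∑' i, ‖f i‖ₑ ≠ ∞ := by
    simp only [f, Integrable.enorm_toL1, ← ofReal_integral_norm_eq_lintegral_enorm (hF_int _),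
      ← ENNReal.ofReal_tsum_of_nonneg (fun i => integral_nonneg fun a => norm_nonneg _) hF_sum]
    exact ENNReal.ofReal_ne_top
  refine ⟨⇑(∑' i, f i), L1.integrable_coeFn _, ?_⟩
  filter_upwards [Lp.hasSum_coeFn_tsum hf, ae_all_iff.2 fun i => (hF_int i).coeFn_toL1]
    with a hsum hf_eq
  convert hsum using 1
  exact funext fun i => (hf_eq i).symm

theorem integral_inner_tsum {E : Type*} [NormedAddCommGroup E] [InnerProductSpace ℝ E]
    [CompleteSpace E] {ι : Type*} [Countable ι] {u : ι → α → E} {η : α → E}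
    (hu_int : ∀ i, Integrable (u i) μ) (hu_sum : Summable fun i => ∫ a, ‖u i a‖ ∂μ)
    (hv_int : ∀ i, Integrable (fun a => ⟪u i a, η a⟫) μ)
    (hv_sum : Summable fun i => ∫ a, ‖⟪u i a, η a⟫‖ ∂μ) :
    Integrable (fun a => ⟪∑' i, u i a, η a⟫) μ ∧
      ∫ a, ⟪∑' i, u i a, η a⟫ ∂μ = ∑' i, ∫ a, ⟪u i a, η a⟫ ∂μ := by
  obtain ⟨_, -, hu⟩ := exists_integrable_ae_hasSum_of_summable_integral_norm hu_int hu_sum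
  obtain ⟨g, hg, hv⟩ := exists_integrable_ae_hasSum_of_summable_integral_norm hv_int hv_sum
  have h_eq : (fun a => ⟪∑' i, u i a, η a⟫) =ᵐ[μ] g := by
    filter_upwards [hu, hv] with a hua hva
    rw [hua.tsum_eq]
    simpa only [innerSLFlip_apply_apply] using ((innerSLFlip ℝ (η a)).hasSum hua).unique hva
  refine ⟨hg.congr h_eq.symm, ?_⟩
  rw [integral_congr_ae h_eq, integral_tsum_of_summable_integral_norm hv_int hv_sum]
  exact integral_congr_ae (hv.mono fun a ha => ha.tsum_eq.symm)

end Integration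

section RandomMatrix

variable {Ω : Type*} [MeasurableSpace Ω] {P : Measure Ω} {n m : ℕ}
  {T : Ω → Matrix (Fin n) (Fin m) ℝ} {M : Ω → Matrix (Fin n) (Fin m) ℝ}
  {η : Ω → EuclideanSpace ℝ (Fin m)}

lemma memLp_frob (hT : ∀ i j, Measurable fun ω => T ω i j)
    (hT₂ : Integrable (fun ω => frobSq (T ω)) P) : MemLp (fun ω => frob (T ω)) 2 P := by
  have hmeas : Measurable fun ω => frobSq (T ω) :=
    Finset.measurable_sum _ fun i _ => Finset.measurable_sum _ fun j _ => (hT i j).pow_const 2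
  exact (memLp_two_iff_integrable_sq (f := fun ω => frob (T ω))
    hmeas.sqrt.aestronglyMeasurable).2 (by simpa only [frob_sq] using hT₂)

lemma aestronglyMeasurable_matVec (hT : ∀ i j, Measurable fun ω => T ω i j)
    (hη : AEStronglyMeasurable η P) : AEStronglyMeasurable (fun ω => matVec (T ω) (η ω)) P :=
  continuous_matVec.comp_aestronglyMeasurable
    ((measurable_pi_iff.2 fun i => measurable_pi_iff.2 (hT i)).aestronglyMeasurable.prodMk hη)

lemma integrable_frob_mul_norm (hT : ∀ i j, Measurable fun ω => T ω i j)
    (hT₂ : Integrable (fun ω => frobSq (T ω)) P) (hη : MemLp η 2 P) :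
    Integrable (fun ω => frob (T ω) * ‖η ω‖) P :=
  (memLp_frob hT hT₂).integrable_mul hη.norm

lemma integral_frob_mul_norm_le (hT : ∀ i j, Measurable fun ω => T ω i j)
    (hT₂ : Integrable (fun ω => frobSq (T ω)) P) (hη : MemLp η 2 P) :
    ∫ ω, frob (T ω) * ‖η ω‖ ∂P ≤ √(∫ ω, frobSq (T ω) ∂P) * √(∫ ω, ‖η ω‖ ^ 2 ∂P) := by
  simpa only [frob_sq] using integral_mul_le_sqrt_mul_sqrt (fun ω => frob_nonneg (T ω))
    (fun ω => norm_nonneg (η ω)) (memLp_frob hT hT₂) hη.norm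

lemma integrable_matVec (hT : ∀ i j, Measurable fun ω => T ω i j)
    (hT₂ : Integrable (fun ω => frobSq (T ω)) P) (hη : MemLp η 2 P) :
    Integrable (fun ω => matVec (T ω) (η ω)) P :=
  (integrable_frob_mul_norm hT hT₂ hη).mono' (aestronglyMeasurable_matVec hT hη.1)
    (ae_of_all _ fun _ => norm_matVec_le _ _)

lemma integral_norm_matVec_le (hT : ∀ i j, Measurable fun ω => T ω i j)
    (hT₂ : Integrable (fun ω => frobSq (T ω)) P) (hη : MemLp η 2 P) :
    ∫ ω, ‖matVec (T ω) (η ω)‖ ∂P ≤ √(∫ ω, frobSq (T ω) ∂P) * √(∫ ω, ‖η ω‖ ^ 2 ∂P) :=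
  (integral_mono (integrable_matVec hT hT₂ hη).norm (integrable_frob_mul_norm hT hT₂ hη)
    fun _ => norm_matVec_le _ _).trans (integral_frob_mul_norm_le hT hT₂ hη)

lemma norm_integral_matVec_sq_le (hT : ∀ i j, Measurable fun ω => T ω i j)
    (hT₂ : Integrable (fun ω => frobSq (T ω)) P) (hη : MemLp η 2 P) :
    ‖∫ ω, matVec (T ω) (η ω) ∂P‖ ^ 2 ≤ (∫ ω, frobSq (T ω) ∂P) * ∫ ω, ‖η ω‖ ^ 2 ∂P := by
  have h := (norm_integral_le_integral_norm _).trans (integral_norm_matVec_le hT hT₂ hη)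
  calc ‖∫ ω, matVec (T ω) (η ω) ∂P‖ ^ 2
      ≤ (√(∫ ω, frobSq (T ω) ∂P) * √(∫ ω, ‖η ω‖ ^ 2 ∂P)) ^ 2 := by gcongr
    _ = (∫ ω, frobSq (T ω) ∂P) * ∫ ω, ‖η ω‖ ^ 2 ∂P := by
      rw [mul_pow, Real.sq_sqrt (integral_nonneg fun ω => frobSq_nonneg _),
        Real.sq_sqrt (integral_nonneg fun ω => sq_nonneg _)]

lemma summable_norm_integral_matVec_sq {T : ℕ → Ω → Matrix (Fin n) (Fin m) ℝ}
    (hT : ∀ k i j, Measurable fun ω => T k ω i j)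
    (hT₂ : ∀ k, Integrable (fun ω => frobSq (T k ω)) P)
    (hT_sum : Summable fun k => ∫ ω, frobSq (T k ω) ∂P) (hη : MemLp η 2 P) :
    Summable fun k => ‖∫ ω, matVec (T k ω) (η ω) ∂P‖ ^ 2 :=
  (hT_sum.mul_right _).of_nonneg_of_le (fun _ => sq_nonneg _)
    fun k => norm_integral_matVec_sq_le (hT k) (hT₂ k) hη

lemma integrable_inner_matVec_const (hM : ∀ i j, Integrable (fun ω => M ω i j) P)
    (v : EuclideanSpace ℝ (Fin m)) (w : EuclideanSpace ℝ (Fin n)) :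
    Integrable (fun ω => ⟪matVec (M ω) v, w⟫) P := by
  simp only [inner_matVec_eq_sum]
  exact integrable_finsetSum _ fun i _ => integrable_finsetSum _ fun j _ =>
    ((hM i j).mul_const _).mul_const _

lemma integral_inner_matVec_const (hM : ∀ i j, Integrable (fun ω => M ω i j) P)
    (v : EuclideanSpace ℝ (Fin m)) (w : EuclideanSpace ℝ (Fin n)) :
    ∫ ω, ⟪matVec (M ω) v, w⟫ ∂P = ⟪matVec (matExp P M) v, w⟫ := by
  have hint : ∀ i j, Integrable (fun ω => M ω i j * v j * w i) P :=
    fun i j => ((hM i j).mul_const _).mul_const _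
  simp only [inner_matVec_eq_sum]
  rw [integral_finsetSum _ fun i _ => integrable_finsetSum _ fun j _ => hint i j]
  refine Finset.sum_congr rfl fun i _ => ?_
  rw [integral_finsetSum _ fun j _ => hint i j]
  refine Finset.sum_congr rfl fun j _ => ?_
  rw [integral_mul_const, integral_mul_const]
  rfl

theorem integral_inner_tsum_matVec_transpose [IsProbabilityMeasure P] {ι : Type*} [Countable ι]
    {T : ι → Ω → Matrix (Fin n) (Fin m) ℝ} (c : ι → EuclideanSpace ℝ (Fin n))
    (hT : ∀ k i j, Measurable fun ω => T k ω i j)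
    (hT₂ : ∀ k, Integrable (fun ω => frobSq (T k ω)) P) (hη : MemLp η 2 P)
    (hsum : Summable fun k => √(∫ ω, frobSq (T k ω) ∂P) * ‖c k‖) :
    Integrable (fun ω => ⟪∑' k, matVec (T k ω)ᵀ (c k), η ω⟫) P ∧
      ∫ ω, ⟪∑' k, matVec (T k ω)ᵀ (c k), η ω⟫ ∂P =
        ∑' k, ⟪c k, ∫ ω, matVec (T k ω) (η ω) ∂P⟫ := by
  have hTt : ∀ k i j, Measurable fun ω => (T k ω)ᵀ i j := fun k i j => hT k j i
  have hTt₂ : ∀ k, Integrable (fun ω => frobSq (T k ω)ᵀ) P := by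
    simpa only [frobSq_transpose] using hT₂
  have hc : ∀ k, MemLp (fun _ : Ω => c k) 2 P := fun k => memLp_const _
  have hinner : ∀ k ω, ⟪matVec (T k ω)ᵀ (c k), η ω⟫ = ⟪c k, matVec (T k ω) (η ω)⟫ :=
    fun k ω => inner_matVec_transpose _ _ _
  have hu_sum : Summable fun k => ∫ ω, ‖matVec (T k ω)ᵀ (c k)‖ ∂P := by
    refine hsum.of_nonneg_of_le (fun _ => integral_nonneg fun _ => norm_nonneg _) fun k => ?_
    simpa [frobSq_transpose, Real.sqrt_sq (norm_nonneg (c k))] using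
      integral_norm_matVec_le (hTt k) (hTt₂ k) (hc k)
  have hv_sum : Summable fun k => ∫ ω, ‖⟪c k, matVec (T k ω) (η ω)⟫‖ ∂P := by
    refine (hsum.mul_right √(∫ ω, ‖η ω‖ ^ 2 ∂P)).of_nonneg_of_le
      (fun _ => integral_nonneg fun _ => norm_nonneg _) fun k => ?_
    calc ∫ ω, ‖⟪c k, matVec (T k ω) (η ω)⟫‖ ∂P
        ≤ ∫ ω, ‖c k‖ * ‖matVec (T k ω) (η ω)‖ ∂P :=
          integral_mono ((integrable_matVec (hT k) (hT₂ k) hη).const_inner (c k)).norm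
            ((integrable_matVec (hT k) (hT₂ k) hη).norm.const_mul _)
            fun ω => norm_inner_le_norm _ _
      _ ≤ ‖c k‖ * (√(∫ ω, frobSq (T k ω) ∂P) * √(∫ ω, ‖η ω‖ ^ 2 ∂P)) := by
          rw [integral_const_mul]
          exact mul_le_mul_of_nonneg_left (integral_norm_matVec_le (hT k) (hT₂ k) hη)
            (norm_nonneg _)
      _ = _ := by ring
  obtain ⟨hint, hval⟩ := integral_inner_tsum (u := fun k ω => matVec (T k ω)ᵀ (c k)) (η := η)
    (fun k => integrable_matVec (hTt k) (hTt₂ k) (hc k)) hu_sum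
    (by simpa only [hinner] using fun k => (integrable_matVec (hT k) (hT₂ k) hη).const_inner (c k))
    (by simpa only [hinner] using hv_sum)
  refine ⟨hint, hval.trans (tsum_congr fun k => ?_)⟩
  simp only [hinner]
  exact integral_inner (integrable_matVec (hT k) (hT₂ k) hη) (c k)

end RandomMatrix

section MeanField

variable {Ω : Type*} [MeasurableSpace Ω] {P : Measure Ω} {m : ℕ}
  {η : Ω → EuclideanSpace ℝ (Fin m)}

lemma blockForm_finset_le {A : Matrix (Fin m) (Fin m) ℝ} {B : ℕ → Matrix (Fin m) (Fin m) ℝ}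
    {H : ℕ → ℕ → Matrix (Fin m) (Fin m) ℝ} {δ : ℝ}
    (h : ∀ (c : EuclideanSpace ℝ (Fin m)) (d : ℕ → EuclideanSpace ℝ (Fin m)),
      (Function.support d).Finite →
        δ * ‖c‖ ^ 2 ≤ ⟪matVec A c, c⟫ + 2 * (∑' k, ⟪matVec (B k) c, d k⟫) +
          ∑' p : ℕ × ℕ, ⟪matVec (H p.1 p.2) (d p.2), d p.1⟫)
    (c : EuclideanSpace ℝ (Fin m)) (S : Finset ℕ) (d : ℕ → EuclideanSpace ℝ (Fin m)) :
    δ * ‖c‖ ^ 2 ≤ ⟪matVec A c, c⟫ + 2 * ∑ k ∈ S, ⟪matVec (B k) c, d k⟫ +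
      ∑ p ∈ S ×ˢ S, ⟪matVec (H p.1 p.2) (d p.2), d p.1⟫ := by
  classical
  set d' : ℕ → EuclideanSpace ℝ (Fin m) := fun k => if k ∈ S then d k else 0
  have hd' : (Function.support d').Finite :=
    S.finite_toSet.subset fun k hk => by_contra fun hkS => hk (if_neg hkS)
  have h₁ : ∑' k, ⟪matVec (B k) c, d' k⟫ = ∑ k ∈ S, ⟪matVec (B k) c, d k⟫ := by
    rw [tsum_eq_sum (s := S) fun k hk => by simp [d', hk]]
    exact Finset.sum_congr rfl fun k hk => by simp [d', hk]
  have h₂ : ∑' p : ℕ × ℕ, ⟪matVec (H p.1 p.2) (d' p.2), d' p.1⟫ =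
      ∑ p ∈ S ×ˢ S, ⟪matVec (H p.1 p.2) (d p.2), d p.1⟫ := by
    rw [tsum_eq_sum (s := S ×ˢ S) fun p hp => ?_]
    · exact Finset.sum_congr rfl fun p hp => by simp [d', (Finset.mem_product.1 hp).1,
        (Finset.mem_product.1 hp).2]
    · rcases not_and_or.1 (Finset.mem_product.not.1 hp) with hp | hp <;> simp [d', hp, matVec_zero]
  simpa only [h₁, h₂] using h c d' hd'

lemma integrable_inner_matVec_self {R : Ω → Matrix (Fin m) (Fin m) ℝ}
    (hR : ∀ i j, Measurable fun ω => R ω i j) (hR_bdd : ∃ C : ℝ, ∀ᵐ ω ∂P, frob (R ω) ≤ C)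
    (hη : MemLp η 2 P) : Integrable (fun ω => ⟪matVec (R ω) (η ω), η ω⟫) P := by
  obtain ⟨C, hC⟩ := hR_bdd
  refine ((hη.integrable_norm_pow two_ne_zero).const_mul C).mono'
    ((aestronglyMeasurable_matVec hR hη.1).inner hη.1) ?_
  filter_upwards [hC] with ω hω
  calc ‖⟪matVec (R ω) (η ω), η ω⟫‖ ≤ ‖matVec (R ω) (η ω)‖ * ‖η ω‖ := norm_inner_le_norm _ _
    _ ≤ frob (R ω) * ‖η ω‖ * ‖η ω‖ := by gcongr; exact norm_matVec_le _ _
    _ ≤ C * ‖η ω‖ ^ 2 := by rw [mul_assoc, ← sq]; gcongr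

theorem integral_blockForm_finset_le {R : Ω → Matrix (Fin m) (Fin m) ℝ}
    {Rbar : ℕ → Ω → Matrix (Fin m) (Fin m) ℝ} {Rhat : ℕ → ℕ → Ω → Matrix (Fin m) (Fin m) ℝ}
    {δ : ℝ} (hR : ∀ i j, Measurable fun ω => R ω i j)
    (hR_bdd : ∃ C : ℝ, ∀ᵐ ω ∂P, frob (R ω) ≤ C)
    (hRbar : ∀ k i j, Measurable fun ω => Rbar k ω i j)
    (hRbar₂ : ∀ k, Integrable (fun ω => frobSq (Rbar k ω)) P)
    (hRhat : ∀ i j a b, Integrable (fun ω => Rhat i j ω a b) P)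
    (hpos : ∀ᵐ ω ∂P, ∀ (c : EuclideanSpace ℝ (Fin m)) (d : ℕ → EuclideanSpace ℝ (Fin m)),
      (Function.support d).Finite →
        δ * ‖c‖ ^ 2 ≤ ⟪matVec (R ω) c, c⟫ + 2 * (∑' k, ⟪matVec (Rbar k ω) c, d k⟫) +
          ∑' p : ℕ × ℕ, ⟪matVec (Rhat p.1 p.2 ω) (d p.2), d p.1⟫)
    (hη : MemLp η 2 P) (S : Finset ℕ) (d : ℕ → EuclideanSpace ℝ (Fin m)) :
    δ * ∫ ω, ‖η ω‖ ^ 2 ∂P ≤ ∫ ω, ⟪matVec (R ω) (η ω), η ω⟫ ∂P +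
      2 * ∑ k ∈ S, ⟪∫ ω, matVec (Rbar k ω) (η ω) ∂P, d k⟫ +
      ∑ p ∈ S ×ˢ S, ⟪matVec (matExp P (Rhat p.1 p.2)) (d p.2), d p.1⟫ := by
  have hRbar_int : ∀ k, Integrable (fun ω => ⟪matVec (Rbar k ω) (η ω), d k⟫) P :=
    fun k => (integrable_matVec (hRbar k) (hRbar₂ k) hη).inner_const _
  have hRhat_int : ∀ p : ℕ × ℕ, Integrable (fun ω => ⟪matVec (Rhat p.1 p.2 ω) (d p.2), d p.1⟫) P :=
    fun p => integrable_inner_matVec_const (hRhat p.1 p.2) _ _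
  have hRbar_eq : ∀ k, ∫ ω, ⟪matVec (Rbar k ω) (η ω), d k⟫ ∂P =
      ⟪∫ ω, matVec (Rbar k ω) (η ω) ∂P, d k⟫ := fun k => by
    simp only [real_inner_comm (d k)]
    exact integral_inner (integrable_matVec (hRbar k) (hRbar₂ k) hη) (d k)
  have h₀ := integrable_inner_matVec_self hR hR_bdd hη
  have h₁ := (integrable_finsetSum S fun k _ => hRbar_int k).const_mul 2
  have h₂ := integrable_finsetSum (S ×ˢ S) fun p _ => hRhat_int p
  calc δ * ∫ ω, ‖η ω‖ ^ 2 ∂P = ∫ ω, δ * ‖η ω‖ ^ 2 ∂P := (integral_const_mul _ _).symm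
    _ ≤ ∫ ω, ⟪matVec (R ω) (η ω), η ω⟫ + 2 * ∑ k ∈ S, ⟪matVec (Rbar k ω) (η ω), d k⟫ +
          ∑ p ∈ S ×ˢ S, ⟪matVec (Rhat p.1 p.2 ω) (d p.2), d p.1⟫ ∂P :=
        integral_mono_ae ((hη.integrable_norm_pow two_ne_zero).const_mul δ) ((h₀.add h₁).add h₂)
          (hpos.mono fun ω hω => blockForm_finset_le (A := R ω) (B := fun k => Rbar k ω)
            (H := fun i j => Rhat i j ω) hω (η ω) S d)
    _ = _ := by
        rw [integral_add ?_ h₂, integral_add h₀ h₁, integral_const_mul,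
          integral_finsetSum _ fun k _ => hRbar_int k, integral_finsetSum _ fun p _ => hRhat_int p]
        · simp only [hRbar_eq, integral_inner_matVec_const (hRhat _ _)]
        · exact h₀.add h₁

theorem integral_inner_meanFieldR [IsProbabilityMeasure P] {R : Ω → Matrix (Fin m) (Fin m) ℝ}
    {Rtil Rbar : ℕ → Ω → Matrix (Fin m) (Fin m) ℝ}
    {Rhat : ℕ → ℕ → Ω → Matrix (Fin m) (Fin m) ℝ} (hR : ∀ i j, Measurable fun ω => R ω i j)
    (hR_bdd : ∃ C : ℝ, ∀ᵐ ω ∂P, frob (R ω) ≤ C)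
    (hRtil : ∀ k i j, Measurable fun ω => Rtil k ω i j)
    (hRbar : ∀ k i j, Measurable fun ω => Rbar k ω i j)
    (hRtil₂ : ∀ k, Integrable (fun ω => frobSq (Rtil k ω)) P)
    (hRbar₂ : ∀ k, Integrable (fun ω => frobSq (Rbar k ω)) P)
    (hRtil_sum : Summable fun k => ∫ ω, frobSq (Rtil k ω) ∂P)
    (hRbar_sum : Summable fun k => ∫ ω, frobSq (Rbar k ω) ∂P)
    (hRhat_sum : Summable fun p : ℕ × ℕ => frobSq (matExp P (Rhat p.1 p.2)))
    (hη : MemLp η 2 P) :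
    ∫ ω, ⟪meanFieldR P R Rtil Rbar Rhat η ω, η ω⟫ ∂P =
      ∫ ω, ⟪matVec (R ω) (η ω), η ω⟫ ∂P +
        2 * ∑' k, ⟪∫ ω, matVec (Rbar k ω) (η ω) ∂P, ∫ ω, matVec (Rtil k ω) (η ω) ∂P⟫ +
        ∑' p : ℕ × ℕ, ⟪matVec (matExp P (Rhat p.1 p.2)) (∫ ω, matVec (Rtil p.2 ω) (η ω) ∂P),
          ∫ ω, matVec (Rtil p.1 ω) (η ω) ∂P⟫ := by
  set a : ℕ → EuclideanSpace ℝ (Fin m) := fun k => ∫ ω, matVec (Rbar k ω) (η ω) ∂P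
  set b : ℕ → EuclideanSpace ℝ (Fin m) := fun k => ∫ ω, matVec (Rtil k ω) (η ω) ∂P
  have ha := summable_norm_integral_matVec_sq hRbar hRbar₂ hRbar_sum hη
  have hb := summable_norm_integral_matVec_sq hRtil hRtil₂ hRtil_sum hη
  have hsqrt : ∀ {T : ℕ → Ω → Matrix (Fin m) (Fin m) ℝ},
      Summable (fun k => ∫ ω, frobSq (T k ω) ∂P) →
        Summable fun k => √(∫ ω, frobSq (T k ω) ∂P) ^ 2 := fun h =>
    h.congr fun k => (Real.sq_sqrt (integral_nonneg fun _ => frobSq_nonneg _)).symm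
  obtain ⟨hB_int, hB⟩ := integral_inner_tsum_matVec_transpose a hRtil hRtil₂ hη
    (summable_mul_of_summable_sq (hsqrt hRtil_sum) ha)
  obtain ⟨hC_int, hC⟩ := integral_inner_tsum_matVec_transpose b hRbar hRbar₂ hη
    (summable_mul_of_summable_sq (hsqrt hRbar_sum) hb)
  obtain ⟨hD_int, hD⟩ := integral_inner_tsum_matVec_transpose
    (T := fun p : ℕ × ℕ => Rtil p.1) (fun p => matVec (matExp P (Rhat p.1 p.2)) (b p.2))
    (fun p => hRtil p.1) (fun p => hRtil₂ p.1) hη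
    (summable_mul_norm_matVec (H := fun i j => matExp P (Rhat i j)) hRhat_sum
      (fun _ => Real.sqrt_nonneg _) (hsqrt hRtil_sum) hb)
  have h₀ := integrable_inner_matVec_self hR hR_bdd hη
  simp only [meanFieldR, inner_add_left]
  rw [integral_add ?_ hD_int, integral_add ?_ hC_int, integral_add h₀ hB_int, hB, hC, hD,
    tsum_congr fun k => real_inner_comm (a k) (b k)]
  · ring
  · exact h₀.add hB_int
  · exact (h₀.add hB_int).add hC_int

end MeanField

theorem meanField_control_weight_coercive_general
    (m : ℕ) {Ω : Type*} [MeasurableSpace Ω] (P : Measure Ω) [IsProbabilityMeasure P]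
    (R : Ω → Matrix (Fin m) (Fin m) ℝ)
    (Rtil Rbar : ℕ → Ω → Matrix (Fin m) (Fin m) ℝ)
    (Rhat : ℕ → ℕ → Ω → Matrix (Fin m) (Fin m) ℝ)
    (hRmeas : ∀ i j, Measurable fun ω => R ω i j)
    (hRbdd : ∃ C : ℝ, ∀ᵐ ω ∂P, frob (R ω) ≤ C)
    (hRtilMeas : ∀ k i j, Measurable fun ω => Rtil k ω i j)
    (hRbarMeas : ∀ k i j, Measurable fun ω => Rbar k ω i j)
    (hRtilInt : ∀ k, Integrable (fun ω => frobSq (Rtil k ω)) P)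
    (hRbarInt : ∀ k, Integrable (fun ω => frobSq (Rbar k ω)) P)
    (hRtilSum : Summable fun k => ∫ ω, frobSq (Rtil k ω) ∂P)
    (hRbarSum : Summable fun k => ∫ ω, frobSq (Rbar k ω) ∂P)
    (hRhatInt : ∀ i j a b, Integrable (fun ω => Rhat i j ω a b) P)
    (hRhatSum : Summable fun p : ℕ × ℕ => frobSq (matExp P (Rhat p.1 p.2)))
    (δ : ℝ)
    (hpos : ∀ᵐ ω ∂P, ∀ (c : EuclideanSpace ℝ (Fin m)) (d : ℕ → EuclideanSpace ℝ (Fin m)),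
      (Function.support d).Finite →
        δ * ‖c‖ ^ 2 ≤ ⟪matVec (R ω) c, c⟫ + 2 * (∑' k, ⟪matVec (Rbar k ω) c, d k⟫) +
          ∑' p : ℕ × ℕ, ⟪matVec (Rhat p.1 p.2 ω) (d p.2), d p.1⟫) :
    ∀ η : Ω → EuclideanSpace ℝ (Fin m), MemLp η 2 P →
      δ * (∫ ω, ‖η ω‖ ^ 2 ∂P) ≤ ∫ ω, ⟪meanFieldR P R Rtil Rbar Rhat η ω, η ω⟫ ∂P := by
  intro η hη
  set a : ℕ → EuclideanSpace ℝ (Fin m) := fun k => ∫ ω, matVec (Rbar k ω) (η ω) ∂P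
  set b : ℕ → EuclideanSpace ℝ (Fin m) := fun k => ∫ ω, matVec (Rtil k ω) (η ω) ∂P
  have ha := summable_norm_integral_matVec_sq hRbarMeas hRbarInt hRbarSum hη
  have hb := summable_norm_integral_matVec_sq hRtilMeas hRtilInt hRtilSum hη
  have hab : Tendsto (fun S => ∑ k ∈ S, ⟪a k, b k⟫) atTop (𝓝 (∑' k, ⟪a k, b k⟫)) :=
    (summable_inner_of_summable_norm_sq ha hb).hasSum
  have hQ : Tendsto (fun S : Finset (ℕ × ℕ) =>
      ∑ p ∈ S, ⟪matVec (matExp P (Rhat p.1 p.2)) (b p.2), b p.1⟫) atTop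
      (𝓝 (∑' p : ℕ × ℕ, ⟪matVec (matExp P (Rhat p.1 p.2)) (b p.2), b p.1⟫)) :=
    (summable_inner_matVec (H := fun i j => matExp P (Rhat i j)) hRhatSum hb hb).hasSum
  rw [integral_inner_meanFieldR hRmeas hRbdd hRtilMeas hRbarMeas hRtilInt hRbarInt hRtilSum
    hRbarSum hRhatSum hη]
  exact ge_of_tendsto' ((tendsto_const_nhds.add (hab.const_mul 2)).add
      (hQ.comp tendsto_finset_product_self))
    fun S => integral_blockForm_finset_le hRmeas hRbdd hRbarMeas hRbarInt hRhatInt hpos hη S b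

/-- If for a.e. `ω` the block quadratic form
`⟨R(ω)c, c⟩ + 2∑ₖ⟨R̄ₖ(ω)c, dₖ⟩ + ∑ᵢⱼ⟨R̂ᵢⱼ(ω)dⱼ, dᵢ⟩` is `≥ δ|c|²` for all `c` and all
finitely supported `(dₖ)`, then `E[⟨ℛη, η⟩] ≥ δ E[|η|²]` for every `η ∈ L²(Ω; ℝᵐ)`. -/
theorem meanField_control_weight_coercive
    (m : ℕ) {Ω : Type*} [MeasurableSpace Ω] (P : Measure Ω) [IsProbabilityMeasure P]
    (R : Ω → Matrix (Fin m) (Fin m) ℝ)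
    (Rtil Rbar : ℕ → Ω → Matrix (Fin m) (Fin m) ℝ)
    (Rhat : ℕ → ℕ → Ω → Matrix (Fin m) (Fin m) ℝ)
    (hRmeas : ∀ i j, Measurable fun ω => R ω i j)
    (hRbdd : ∃ C : ℝ, ∀ᵐ ω ∂P, frob (R ω) ≤ C)
    (hRtilMeas : ∀ k i j, Measurable fun ω => Rtil k ω i j)
    (hRbarMeas : ∀ k i j, Measurable fun ω => Rbar k ω i j)
    (hRtilInt : ∀ k, Integrable (fun ω => frobSq (Rtil k ω)) P)
    (hRbarInt : ∀ k, Integrable (fun ω => frobSq (Rbar k ω)) P)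
    (hRtilSum : Summable fun k => ∫ ω, frobSq (Rtil k ω) ∂P)
    (hRbarSum : Summable fun k => ∫ ω, frobSq (Rbar k ω) ∂P)
    (hRhatInt : ∀ i j a b, Integrable (fun ω => Rhat i j ω a b) P)
    (hRhatSum : Summable fun p : ℕ × ℕ => frobSq (matExp P (Rhat p.1 p.2)))
    (δ : ℝ) (hδ : 0 < δ)
    (hpos : ∀ᵐ ω ∂P, ∀ (c : EuclideanSpace ℝ (Fin m)) (d : ℕ → EuclideanSpace ℝ (Fin m)),
      (Function.support d).Finite →
        δ * ‖c‖ ^ 2 ≤ ⟪matVec (R ω) c, c⟫ + 2 * (∑' k, ⟪matVec (Rbar k ω) c, d k⟫) +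
          ∑' p : ℕ × ℕ, ⟪matVec (Rhat p.1 p.2 ω) (d p.2), d p.1⟫) :
    ∀ η : Ω → EuclideanSpace ℝ (Fin m), MemLp η 2 P →
      δ * (∫ ω, ‖η ω‖ ^ 2 ∂P) ≤ ∫ ω, ⟪meanFieldR P R Rtil Rbar Rhat η ω, η ω⟫ ∂P :=
  meanField_control_weight_coercive_general m P R Rtil Rbar Rhat hRmeas hRbdd hRtilMeas hRbarMeas
    hRtilInt hRbarInt hRtilSum hRbarSum hRhatInt hRhatSum δ hpos
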